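/- Let δ, ρ, τ be types, let messages be given by a finite set and functions hash : α → δ, ins : α → Set (ρ × τ), del : α → Set (δ × ρ × τ), and let ≺ be a strict partial order on α (causal precedence) such that hash is injective and for every message m, every x ∈ del m satisfies x.1 ∈ {hash m' | m' ≺ m} (deletions only reference hashes of strict causal predecessors). Define the delivery function f : Set (δ × ρ × τ) → α → Set (δ × ρ × τ) by f S m = (S \ del m) ∪ {(hash m, r, t) | (r, t) ∈ ins m}. Then for any two lists l₁, l₂ of messages that are permutations of each other, have no duplicate elements, and each respect causal order, and any initial state S, List.foldl f S l₁ = List.foldl f S l₂. (The BEC replication algorithm for insert/delete updates converges: any two correct replicas that have delivered the same set of messages, each in some causal order, are in the same database state.) -/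

import Mathlib

/-!
Deliveries of two concurrent messages commute: every tuple inserted by `a` is tagged with
`hash a`, while `b` only deletes tuples tagged with hashes of its causal predecessors, and
`hash` is injective. Two causal orders of the same messages are related by such swaps: the
messages preceding the head `a` of one list inside the other list are concurrent with `a`,
so `a` can be moved to the front there without changing the final state.
-/

/-- A list `l` respects causal order w.r.t. the causal precedence relation
`prec`: it has no duplicates, and whenever `prec a b` and both occur in `l`,
then `a` occurs before `b` in `l`. -/
def RespectsCausalOrder {α : Type*} (prec : α → α → Prop) (l : List α) : Prop :=
  l.Nodup ∧ ∀ a b : α, prec a b → a ∈ l → b ∈ l → [a, b].Sublist l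

namespace List

variable {α β : Type*}

theorem Nodup.not_pair_sublist_swap {a b : α} {l : List α} (hl : l.Nodup)
    (hab : [a, b] <+ l) : ¬ [b, a] <+ l := by
  induction l with
  | nil => simp at hab
  | cons c t ih =>
    intro hba
    rw [nodup_cons] at hl
    rw [cons_sublist_cons'] at hab hba
    rcases hab with hab | ⟨rfl, hb⟩ <;> rcases hba with hba | ⟨rfl, ha⟩
    · exact ih hl.2 hab hba
    · exact hl.1 (hab.subset (by simp))
    · exact hl.1 (hba.subset (by simp))
    · exact hl.1 (by simpa using hb)

theorem foldl_append_cons_of_commute {f : β → α → β} {a : α} {u : List α}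
    (h : ∀ x ∈ u, ∀ s, f (f s x) a = f (f s a) x) (v : List α) (s : β) :
    (u ++ a :: v).foldl f s = (u ++ v).foldl f (f s a) := by
  induction u generalizing s with
  | nil => rfl
  | cons x u ih =>
    rw [cons_append, foldl_cons, ih (fun y hy => h y (mem_cons_of_mem x hy)), h x mem_cons_self]
    rfl

theorem Perm.foldl_eq_of_pairwise {R : α → α → Prop} {f : β → α → β}
    (hf : ∀ s x y, ¬ R x y → ¬ R y x → f (f s x) y = f (f s y) x) {l₁ l₂ : List α}
    (p : l₁ ~ l₂) (h₁ : l₁.Pairwise fun x y => ¬ R y x) (h₂ : l₂.Pairwise fun x y => ¬ R y x)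
    (s : β) : l₁.foldl f s = l₂.foldl f s := by
  induction l₁ generalizing l₂ s with
  | nil => rw [p.nil_eq]
  | cons a t ih =>
    obtain ⟨u, v, rfl⟩ := append_of_mem (p.subset mem_cons_self)
    have hcomm : ∀ x ∈ u, ∀ s, f (f s x) a = f (f s a) x := by
      intro x hx s
      have hax : ¬ R a x := (pairwise_append.1 h₂).2.2 x hx a mem_cons_self
      have hxa : ¬ R x a := by
        rcases mem_cons.1 (p.symm.subset (mem_append_left _ hx)) with rfl | hxt
        · exact hax
        · exact (pairwise_cons.1 h₁).1 x hxt
      exact hf s x a hxa hax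
    rw [foldl_cons, foldl_append_cons_of_commute hcomm]
    exact ih (p.trans perm_middle).cons_inv h₁.of_cons
      (h₂.sublist ((sublist_cons_self a v).append_left u)) (f s a)

end List

theorem RespectsCausalOrder.pairwise {α : Type*} {prec : α → α → Prop} {l : List α}
    (h : RespectsCausalOrder prec l) : l.Pairwise fun a b => ¬ prec b a := by
  refine List.pairwise_iff_forall_sublist.2 fun {a b} hab hba => ?_
  exact h.1.not_pair_sublist_swap hab
    (h.2 b a hba (hab.subset (by simp)) (hab.subset (by simp)))

section Delivery

variable {α δ ρ τ : Type*} (hash : α → δ) (ins : α → Set (ρ × τ)) (del : α → Set (δ × ρ × τ))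

def deliver (S : Set (δ × ρ × τ)) (m : α) : Set (δ × ρ × τ) :=
  (S \ del m) ∪ {x | x.1 = hash m ∧ (x.2.1, x.2.2) ∈ ins m}

variable {hash del}

theorem deliver_deliver_comm {a b : α} (hab : ∀ x, x.1 = hash a → x ∉ del b)
    (hba : ∀ x, x.1 = hash b → x ∉ del a) (S : Set (δ × ρ × τ)) :
    deliver hash ins del (deliver hash ins del S a) b =
      deliver hash ins del (deliver hash ins del S b) a := by
  ext x
  have ha := hab x
  have hb := hba x
  simp only [deliver, Set.mem_union, Set.mem_sdiff, Set.mem_ofPred_eq]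
  tauto

theorem notMem_del_of_not_prec {prec : α → α → Prop} (hinj : Function.Injective hash)
    (hdel : ∀ m, ∀ x ∈ del m, ∃ m', prec m' m ∧ x.1 = hash m') {a b : α} (hab : ¬ prec a b)
    (x : δ × ρ × τ) (hx : x.1 = hash a) : x ∉ del b := by
  intro hxb
  obtain ⟨m, hmb, hxm⟩ := hdel b x hxb
  exact hab (hinj (hx.symm.trans hxm) ▸ hmb)

end Delivery

theorem bec_replication_converges_general {α δ ρ τ : Type*}
    (prec : α → α → Prop)
    (hash : α → δ) (ins : α → Set (ρ × τ)) (del : α → Set (δ × ρ × τ))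
    (hinj : Function.Injective hash)
    (hdel : ∀ m : α, ∀ x ∈ del m, ∃ m' : α, prec m' m ∧ x.1 = hash m')
    (f : Set (δ × ρ × τ) → α → Set (δ × ρ × τ))
    (hf : ∀ (S : Set (δ × ρ × τ)) (m : α),
      f S m = (S \ del m) ∪ {x : δ × ρ × τ | x.1 = hash m ∧ (x.2.1, x.2.2) ∈ ins m})
    (l₁ l₂ : List α) (hperm : l₁.Perm l₂)
    (h₁ : RespectsCausalOrder prec l₁) (h₂ : RespectsCausalOrder prec l₂)
    (S : Set (δ × ρ × τ)) :
    List.foldl f S l₁ = List.foldl f S l₂ := by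
  obtain rfl : f = deliver hash ins del := funext₂ hf
  refine hperm.foldl_eq_of_pairwise (fun T a b hab hba => ?_) h₁.pairwise h₂.pairwise S
  exact deliver_deliver_comm ins (notMem_del_of_not_prec hinj hdel hab)
    (notMem_del_of_not_prec hinj hdel hba) T

/-- Convergence of the BEC replication algorithm for insert/delete updates:
any two correct replicas that have delivered the same set of messages, each in
some causal order, are in the same database state. -/
theorem bec_replication_converges {α δ ρ τ : Type*} [Fintype α]
    (prec : α → α → Prop)
    (hirr : ∀ a : α, ¬ prec a a)
    (htrans : ∀ a b c : α, prec a b → prec b c → prec a c)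
    (hash : α → δ) (ins : α → Set (ρ × τ)) (del : α → Set (δ × ρ × τ))
    (hinj : Function.Injective hash)
    (hdel : ∀ m : α, ∀ x ∈ del m, ∃ m' : α, prec m' m ∧ x.1 = hash m')
    (f : Set (δ × ρ × τ) → α → Set (δ × ρ × τ))
    (hf : ∀ (S : Set (δ × ρ × τ)) (m : α),
      f S m = (S \ del m) ∪ {x : δ × ρ × τ | x.1 = hash m ∧ (x.2.1, x.2.2) ∈ ins m})
    (l₁ l₂ : List α) (hperm : l₁.Perm l₂)
    (h₁ : RespectsCausalOrder prec l₁) (h₂ : RespectsCausalOrder prec l₂)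
    (S : Set (δ × ρ × τ)) :
    List.foldl f S l₁ = List.foldl f S l₂ :=
  bec_replication_converges_general prec hash ins del hinj hdel f hf l₁ l₂ hperm h₁ h₂ S
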